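/- Let x > 10 be real, let λ1, λ2 ∈ ℂ \ {0} with β := |log(λ1/λ2)| satisfying 0 < β < exp(−5·e^{x+1}), and set g_j(w) = λ_j·exp(w) for j = 1, 2. Let n ≥ 1 be an integer with n ≤ e^{3x}, and let z_0, z_1, …, z_n ∈ ℂ with g_1(z_{j+1}) = z_j for j = 0, 1, …, n−1; write z = z_n. Assume |Dg_1^j(g_1^k(z))| > exp(−e^{x+1}) for all integers j, k ≥ 0 with j + k ≤ n. Then there exists y_n ∈ ℂ such that g_2^n(y_n) = g_1^n(z), |g_2^j(y_n) − g_1^j(z_n)| < β·exp(e^{x+2}) for all 0 ≤ j ≤ n, and |log(Dg_2^n(y_n)/Dg_1^n(z_n))| < exp(−e^x). -/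

import Mathlib

/-!
Write `c = log (λ₁/λ₂)`, so that `λ₂ exp (w + c) = λ₁ exp w`, and let `δ = exp (-e^{x+1})` be the
lower bound on the derivatives. Starting from `g₁ⁿ(z)` and going backwards along the `g₁`-orbit
`v_k = g₁^{n-k}(z)`, take for `u_{k+1}` the `g₂`-preimage of `u_k` closest to `v_{k+1}`, namely
`v_{k+1} + c + log (u_k / v_k)`. The errors `e_k = |u_k - v_k|` satisfy
`e_{k+1} ≤ |c| + (1 + δ) e_k / |v_k|` as long as `e_k ≤ δ |v_k|`, so `e_k` is at most
`|c| (1 + δ)^k` times the sum of the inverse derivatives `1 / |Dg₁^m(v_k)|`, `m < k`; each term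
is at most `1/δ`, and `(1 + δ)^n ≤ e` since `n δ ≤ 1`. Finally
`Dg₂ⁿ(u_n) / Dg₁ⁿ(z) = ∏ u_k / v_k`, whose logarithm is at most `2 ∑ e_k / |v_k|`.
-/

open Function

/-- `Df g k w = ∏_{j=1}^k g^j(w)`, the derivative of the k-th iterate of
`g(w) = λ·exp w` at `w`. -/
noncomputable def Df (g : ℂ → ℂ) (k : ℕ) (w : ℂ) : ℂ :=
  ∏ j ∈ Finset.range k, g^[j + 1] w

open Complex Finset

lemma Df_zero (g : ℂ → ℂ) (w : ℂ) : Df g 0 w = 1 := by simp [Df]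

lemma Df_one (g : ℂ → ℂ) (w : ℂ) : Df g 1 w = g w := by simp [Df]

lemma Df_succ (g : ℂ → ℂ) (m : ℕ) (w : ℂ) : Df g (m + 1) w = g w * Df g m (g w) := by
  rw [Df, prod_range_succ', mul_comm]
  rfl

lemma Df_eq_prod_of_iterate {g : ℂ → ℂ} {u : ℕ → ℂ} {n : ℕ} {y : ℂ}
    (h : ∀ j ≤ n, g^[j] y = u (n - j)) : Df g n y = ∏ k ∈ range n, u k := by
  rw [Df, ← prod_range_reflect]
  refine prod_congr rfl fun j hj => ?_
  have hj : j < n := mem_range.mp hj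
  rw [h _ (by omega)]
  congr 1
  omega

lemma iterate_eq_of_backward_orbit {α : Type*} {f : α → α} {u : ℕ → α} {N : ℕ}
    (h : ∀ k < N, f (u (k + 1)) = u k) : ∀ j ≤ N, f^[j] (u N) = u (N - j) := by
  intro j
  induction j with
  | zero => simp
  | succ j ih =>
    intro hj
    have hstep := h (N - (j + 1)) (by omega)
    rw [show N - (j + 1) + 1 = N - j by omega] at hstep
    rw [iterate_succ_apply', ih (by omega), hstep]

noncomputable def invDerivSum (g : ℂ → ℂ) (k : ℕ) (w : ℂ) : ℝ :=
  ∑ m ∈ range k, ‖Df g m w‖⁻¹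

lemma invDerivSum_zero (g : ℂ → ℂ) (w : ℂ) : invDerivSum g 0 w = 0 := by simp [invDerivSum]

lemma invDerivSum_nonneg (g : ℂ → ℂ) (k : ℕ) (w : ℂ) : 0 ≤ invDerivSum g k w :=
  sum_nonneg fun _ _ => inv_nonneg.mpr (norm_nonneg _)

lemma invDerivSum_succ (g : ℂ → ℂ) (k : ℕ) (w : ℂ) :
    invDerivSum g (k + 1) w = 1 + invDerivSum g k (g w) / ‖g w‖ := by
  simp only [invDerivSum, sum_range_succ', Df_succ, Df_zero, norm_mul, mul_inv, sum_div,
    norm_one, inv_one]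
  rw [add_comm]
  congr 1
  exact sum_congr rfl fun m _ => by rw [div_eq_mul_inv, mul_comm]

lemma invDerivSum_le {g : ℂ → ℂ} {w : ℂ} {k : ℕ} {δ : ℝ} (hδ : 0 < δ)
    (h : ∀ m < k, δ < ‖Df g m w‖) : invDerivSum g k w ≤ k / δ := by
  have := sum_le_card_nsmul (range k) (fun m => ‖Df g m w‖⁻¹) δ⁻¹
    fun m hm => inv_anti₀ hδ (h m (mem_range.mp hm)).le
  simpa [invDerivSum, div_eq_mul_inv] using this

lemma one_add_pow_le_exp_one {δ : ℝ} {k : ℕ} (hδ : 0 ≤ δ) (hk : k * δ ≤ 1) :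
    (1 + δ) ^ k ≤ Real.exp 1 :=
  calc (1 + δ) ^ k ≤ Real.exp δ ^ k := by
        gcongr
        linarith [Real.add_one_le_exp δ]
    _ = Real.exp (k * δ) := (Real.exp_nat_mul δ k).symm
    _ ≤ Real.exp 1 := Real.exp_le_exp.mpr hk

lemma three_mul_add_two_le_exp_add_one {x : ℝ} (hx : -1 ≤ x) : 3 * x + 2 ≤ Real.exp (x + 1) := by
  nlinarith [Real.quadratic_le_exp_of_nonneg (by linarith : 0 ≤ x + 1), sq_nonneg (x - 1)]

lemma norm_log_one_add_le_of_norm_le {v : ℂ} {d : ℝ} (hd : d ≤ 1 / 2) (hv : ‖v‖ ≤ d) :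
    ‖log (1 + v)‖ ≤ (1 + d) * ‖v‖ := by
  have hv1 : ‖v‖ < 1 := by linarith
  have hinv : (1 - ‖v‖)⁻¹ ≤ 2 := by
    rw [inv_le_comm₀ (by linarith) (by norm_num)]
    linarith
  have := norm_log_one_add_le hv1
  nlinarith [norm_nonneg v]

lemma log_prod_eq_sum_log {ι : Type*} {s : Finset ι} {z : ι → ℂ} (hz : ∀ k ∈ s, z k ≠ 0)
    (him : |(∑ k ∈ s, log (z k)).im| < Real.pi) :
    log (∏ k ∈ s, z k) = ∑ k ∈ s, log (z k) := by
  rw [← prod_congr rfl fun k hk => exp_log (hz k hk), ← exp_sum, log_exp] <;>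
    linarith [abs_lt.mp him]

lemma norm_log_prod_le {ι : Type*} {s : Finset ι} {z : ι → ℂ} {d : ℝ} (hd : d ≤ 1 / 2)
    (hz : ∀ k ∈ s, ‖z k - 1‖ ≤ d) (hs : #s * d ≤ 1) :
    ‖log (∏ k ∈ s, z k)‖ ≤ 2 * (#s * d) := by
  have hlog : ∀ k ∈ s, ‖log (z k)‖ ≤ 2 * d := fun k hk => by
    have := norm_log_one_add_le_of_norm_le hd (hz k hk)
    rw [add_sub_cancel] at this
    nlinarith [norm_nonneg (z k - 1), hz k hk]
  have hsum : ‖∑ k ∈ s, log (z k)‖ ≤ 2 * (#s * d) := by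
    refine (norm_sum_le _ _).trans ?_
    simpa [mul_left_comm] using sum_le_card_nsmul s _ _ hlog
  have hz0 : ∀ k ∈ s, z k ≠ 0 := fun k hk h0 => by
    have := hz k hk
    rw [h0, zero_sub, norm_neg, norm_one] at this
    linarith
  rw [log_prod_eq_sum_log hz0]
  · exact hsum
  · linarith [abs_im_le_norm (∑ k ∈ s, log (z k)), Real.pi_gt_three]

lemma norm_log_prod_div_le {u v : ℕ → ℂ} {n : ℕ} {δ K : ℝ} (hδ0 : 0 < δ) (hδ : δ ≤ 1 / 2)
    (hnδ : n * δ ≤ 1) (hKδ : K ≤ δ ^ 2) (hv : ∀ k < n, δ < ‖v k‖)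
    (huv : ∀ k < n, ‖u k - v k‖ ≤ K) :
    ‖log (∏ k ∈ range n, u k / v k)‖ ≤ 2 * (n * (K / δ)) := by
  have hd : K / δ ≤ δ := by rw [div_le_iff₀ hδ0]; linarith
  have hquot : ∀ k ∈ range n, ‖u k / v k - 1‖ ≤ K / δ := fun k hk => by
    have hk := mem_range.mp hk
    rw [div_sub_one (norm_pos_iff.mp (hδ0.trans (hv k hk))), norm_div]
    exact div_le_div₀ ((norm_nonneg _).trans (huv k hk)) (huv k hk) hδ0 (hv k hk).le
  have hnd : #(range n) * (K / δ) ≤ 1 := by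
    rw [card_range]
    exact (mul_le_mul_of_nonneg_left hd n.cast_nonneg).trans hnδ
  simpa only [card_range] using norm_log_prod_le (hd.trans hδ) hquot hnd

noncomputable def shadowOrbit (c : ℂ) (v : ℕ → ℂ) : ℕ → ℂ
  | 0 => v 0
  | k + 1 => v (k + 1) + c + log (shadowOrbit c v k / v k)

section ShadowOrbit

variable {c : ℂ} {v : ℕ → ℂ}

lemma shadowOrbit_succ_sub {k : ℕ} (hv : v k ≠ 0) :
    shadowOrbit c v (k + 1) - v (k + 1) = c + log (1 + (shadowOrbit c v k - v k) / v k) := by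
  rw [shadowOrbit, one_add_div hv, add_sub_cancel]
  ring

lemma lam_mul_exp_shadowOrbit_succ {lam1 lam2 : ℂ} (hc : lam2 * exp c = lam1) {k : ℕ}
    (hv : lam1 * exp (v (k + 1)) = v k) (hvk : v k ≠ 0) (hu : shadowOrbit c v k ≠ 0) :
    lam2 * exp (shadowOrbit c v (k + 1)) = shadowOrbit c v k := by
  rw [shadowOrbit, exp_add, exp_add, exp_log (div_ne_zero hu hvk)]
  rw [← hv, ← hc] at hvk ⊢
  have hlam2 : lam2 ≠ 0 := left_ne_zero_of_mul (left_ne_zero_of_mul hvk)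
  field_simp

lemma norm_shadowOrbit_succ_sub_le {δ : ℝ} (hδ : δ ≤ 1 / 2) {k : ℕ} (hvk : v k ≠ 0)
    (h : ‖shadowOrbit c v k - v k‖ ≤ δ * ‖v k‖) :
    ‖shadowOrbit c v (k + 1) - v (k + 1)‖ ≤
      ‖c‖ + (1 + δ) * (‖shadowOrbit c v k - v k‖ / ‖v k‖) := by
  have hq : ‖(shadowOrbit c v k - v k) / v k‖ ≤ δ := by
    rwa [norm_div, div_le_iff₀ (norm_pos_iff.mpr hvk)]
  rw [shadowOrbit_succ_sub hvk, ← norm_div]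
  exact (norm_add_le _ _).trans (by gcongr; exact norm_log_one_add_le_of_norm_le hδ hq)

lemma norm_shadowOrbit_sub_le {g : ℂ → ℂ} {δ : ℝ} {N : ℕ} (hδ0 : 0 ≤ δ) (hδ : δ ≤ 1 / 2)
    (hv : ∀ k < N, g (v (k + 1)) = v k) (hv0 : ∀ k < N, v k ≠ 0)
    (hsmall : ∀ k < N, ‖c‖ * (1 + δ) ^ k * invDerivSum g k (v k) ≤ δ * ‖v k‖) :
    ∀ k ≤ N, ‖shadowOrbit c v k - v k‖ ≤ ‖c‖ * (1 + δ) ^ k * invDerivSum g k (v k) := by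
  intro k
  induction k with
  | zero => simp [shadowOrbit, invDerivSum_zero]
  | succ k ih =>
    intro hk
    have hkN : k < N := hk
    have IH := ih hkN.le
    have hpos : 0 < ‖v k‖ := norm_pos_iff.mpr (hv0 k hkN)
    calc _ ≤ ‖c‖ + (1 + δ) * (‖shadowOrbit c v k - v k‖ / ‖v k‖) :=
          norm_shadowOrbit_succ_sub_le hδ (hv0 k hkN) (IH.trans (hsmall k hkN))
      _ ≤ ‖c‖ + (1 + δ) * (‖c‖ * (1 + δ) ^ k * invDerivSum g k (v k) / ‖v k‖) := by
          gcongr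
      _ ≤ ‖c‖ * (1 + δ) ^ (k + 1) * invDerivSum g (k + 1) (v (k + 1)) := by
          rw [invDerivSum_succ, hv k hkN, mul_one_add]
          have : ‖c‖ ≤ ‖c‖ * (1 + δ) ^ (k + 1) :=
            le_mul_of_one_le_right (norm_nonneg c) (one_le_pow₀ (by linarith))
          linarith [show ‖c‖ * (1 + δ) ^ (k + 1) * (invDerivSum g k (v k) / ‖v k‖) =
            (1 + δ) * (‖c‖ * (1 + δ) ^ k * invDerivSum g k (v k) / ‖v k‖) by ring]

end ShadowOrbit

theorem exists_shadowOrbit {lam1 lam2 c : ℂ} (hc : lam2 * exp c = lam1) {g1 g2 : ℂ → ℂ}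
    (hg1 : ∀ w, g1 w = lam1 * exp w) (hg2 : ∀ w, g2 w = lam2 * exp w)
    {n : ℕ} {δ K : ℝ} (hδ0 : 0 < δ) (hδ : δ ≤ 1 / 2) (hnδ : n * δ ≤ 1)
    (hcK : ‖c‖ * Real.exp 1 * n ≤ δ * K) (hKδ : K ≤ δ ^ 2) {z : ℂ}
    (hder : ∀ j k : ℕ, j + k ≤ n → δ < ‖Df g1 j (g1^[k] z)‖) :
    ∃ y, g2^[n] y = g1^[n] z ∧ (∀ j ≤ n, ‖g2^[j] y - g1^[j] z‖ ≤ K) ∧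
      ‖log (Df g2 n y / Df g1 n z)‖ ≤ 2 * (n * (K / δ)) := by
  set v : ℕ → ℂ := fun k => g1^[n - k] z
  set u := shadowOrbit c v
  have hv : ∀ k < n, g1 (v (k + 1)) = v k := fun k hk => by
    simp only [v, ← iterate_succ_apply' g1]
    congr 1
    omega
  have hvδ : ∀ k < n, δ < ‖v k‖ := fun k hk => by
    have := hder 1 (n - (k + 1)) (by omega)
    rwa [Df_one, show g1 (g1^[n - (k + 1)] z) = v k from hv k hk] at this
  have hv0 : ∀ k < n, v k ≠ 0 := fun k hk => norm_pos_iff.mp (hδ0.trans (hvδ k hk))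
  have hbound : ∀ k ≤ n, ‖c‖ * (1 + δ) ^ k * invDerivSum g1 k (v k) ≤ K := fun k hk => by
    have hS : invDerivSum g1 k (v k) ≤ n / δ :=
      (invDerivSum_le hδ0 fun m hm => hder m (n - k) (by omega)).trans (by gcongr)
    have hkδ : k * δ ≤ 1 := (mul_le_mul_of_nonneg_right (by exact_mod_cast hk) hδ0.le).trans hnδ
    have hpow : (1 + δ) ^ k ≤ Real.exp 1 := one_add_pow_le_exp_one hδ0.le hkδ
    calc _ ≤ ‖c‖ * Real.exp 1 * (n / δ) := by gcongr; exact invDerivSum_nonneg _ _ _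
      _ ≤ K := by rw [← mul_div_assoc, div_le_iff₀ hδ0]; linarith
  have herr : ∀ k ≤ n, ‖u k - v k‖ ≤ K := fun k hk =>
    (norm_shadowOrbit_sub_le hδ0.le hδ hv hv0 (fun k hk => (hbound k hk.le).trans
      (hKδ.trans (by rw [sq]; gcongr; exact (hvδ k hk).le))) k hk).trans (hbound k hk)
  have hu0 : ∀ k < n, u k ≠ 0 := fun k hk h0 => by
    have := herr k hk.le
    rw [h0, zero_sub, norm_neg] at this
    nlinarith [hvδ k hk]
  have hu : ∀ j ≤ n, g2^[j] (u n) = u (n - j) := iterate_eq_of_backward_orbit fun k hk => by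
    rw [hg2]
    exact lam_mul_exp_shadowOrbit_succ hc (by rw [← hg1]; exact hv k hk) (hv0 k hk) (hu0 k hk)
  have hz : ∀ j ≤ n, g1^[j] z = v (n - j) := fun j hj => by simp only [v, Nat.sub_sub_self hj]
  refine ⟨u n, ?_, fun j hj => ?_, ?_⟩
  · rw [hu n le_rfl, hz n le_rfl, Nat.sub_self]
    rfl
  · rw [hu j hj, hz j hj]
    exact herr _ (Nat.sub_le _ _)
  · rw [Df_eq_prod_of_iterate hu, Df_eq_prod_of_iterate hz, ← prod_div_distrib]
    exact norm_log_prod_div_le hδ0 hδ hnδ hKδ hvδ fun k hk => herr k hk.le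

theorem exists_shadowOrbit_of_le_exp {lam1 lam2 c : ℂ} (hc : lam2 * exp c = lam1)
    {g1 g2 : ℂ → ℂ} (hg1 : ∀ w, g1 w = lam1 * exp w) (hg2 : ∀ w, g2 w = lam2 * exp w)
    {n : ℕ} {E : ℝ} (hE : 1 ≤ E) (hn : n ≤ Real.exp (E - 2)) (hcE : ‖c‖ < Real.exp (-5 * E))
    {z : ℂ} (hder : ∀ j k : ℕ, j + k ≤ n → Real.exp (-E) < ‖Df g1 j (g1^[k] z)‖) :
    ∃ y, g2^[n] y = g1^[n] z ∧ (∀ j ≤ n, ‖g2^[j] y - g1^[j] z‖ ≤ ‖c‖ * Real.exp (2 * E)) ∧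
      ‖log (Df g2 n y / Df g1 n z)‖ < Real.exp (-E) := by
  have hδ : Real.exp (-E) ≤ 1 / 2 :=
    (Real.exp_le_exp.mpr (by linarith)).trans Real.exp_neg_one_lt_half.le
  have hnδ : n * Real.exp (-E) ≤ 1 := by
    refine (mul_le_mul_of_nonneg_right hn (Real.exp_pos _).le).trans ?_
    rw [← Real.exp_add]
    exact Real.exp_le_one_iff.mpr (by linarith)
  have hcK : ‖c‖ * Real.exp 1 * n ≤ Real.exp (-E) * (‖c‖ * Real.exp (2 * E)) :=
    calc ‖c‖ * Real.exp 1 * n ≤ ‖c‖ * (Real.exp 1 * Real.exp (E - 2)) := by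
          rw [mul_assoc]; gcongr
      _ ≤ ‖c‖ * (Real.exp (-E) * Real.exp (2 * E)) := by
          simp only [← Real.exp_add]
          exact mul_le_mul_of_nonneg_left (Real.exp_le_exp.mpr (by linarith)) (norm_nonneg c)
      _ = _ := by ring
  have hKδ : ‖c‖ * Real.exp (2 * E) ≤ Real.exp (-E) ^ 2 :=
    calc ‖c‖ * Real.exp (2 * E) ≤ Real.exp (-5 * E) * Real.exp (2 * E) := by gcongr
      _ ≤ Real.exp (-E) ^ 2 := by
          rw [sq, ← Real.exp_add, ← Real.exp_add]
          exact Real.exp_le_exp.mpr (by linarith)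
  obtain ⟨y, hy, herr, hlog⟩ :=
    exists_shadowOrbit hc hg1 hg2 (Real.exp_pos _) hδ hnδ hcK hKδ hder
  refine ⟨y, hy, herr, hlog.trans_lt ?_⟩
  calc 2 * (n * (‖c‖ * Real.exp (2 * E) / Real.exp (-E)))
      ≤ 2 * (Real.exp (E - 2) * (Real.exp (-5 * E) * Real.exp (2 * E) / Real.exp (-E))) := by
        gcongr
    _ = 2 * Real.exp (-1) * Real.exp (-E - 1) := by
        simp only [← Real.exp_add, ← Real.exp_sub, mul_assoc]
        ring_nf
    _ < Real.exp (-E) := by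
        nlinarith [Real.exp_neg_one_lt_half, Real.exp_pos (-E - 1),
          Real.exp_lt_exp.mpr (show -E - 1 < -E by linarith)]

theorem stmt_19_general (x : ℝ) (hx : 10 < x)
    (lam1 lam2 : ℂ) (h1 : lam1 ≠ 0) (h2 : lam2 ≠ 0)
    (β : ℝ) (hβ : β = ‖Complex.log (lam1 / lam2)‖)
    (hβ0 : 0 < β) (hβx : β < Real.exp (-5 * Real.exp (x + 1)))
    (g1 g2 : ℂ → ℂ)
    (hg1 : ∀ w, g1 w = lam1 * Complex.exp w)
    (hg2 : ∀ w, g2 w = lam2 * Complex.exp w)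
    (n : ℕ) (hn : (n : ℝ) ≤ Real.exp (3 * x))
    (zs : ℕ → ℂ)
    (hder : ∀ j k : ℕ, j + k ≤ n →
      Real.exp (-Real.exp (x + 1)) < ‖Df g1 j (g1^[k] (zs n))‖) :
    ∃ y : ℂ, g2^[n] y = g1^[n] (zs n) ∧
      (∀ j : ℕ, j ≤ n →
        ‖g2^[j] y - g1^[j] (zs n)‖ < β * Real.exp (Real.exp (x + 2))) ∧
      ‖Complex.log (Df g2 n y / Df g1 n (zs n))‖ <
        Real.exp (-Real.exp x) := by
  have hxE := three_mul_add_two_le_exp_add_one (by linarith : -1 ≤ x)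
  have hc : lam2 * exp (log (lam1 / lam2)) = lam1 := by
    rw [exp_log (div_ne_zero h1 h2)]
    field_simp
  obtain ⟨y, hy, herr, hlog⟩ := exists_shadowOrbit_of_le_exp hc hg1 hg2 (by linarith)
    (hn.trans (Real.exp_le_exp.mpr (by linarith))) (hβ ▸ hβx) hder
  refine ⟨y, hy, fun j hj => (herr j hj).trans_lt ?_, hlog.trans_le ?_⟩
  · rw [← hβ]
    refine mul_lt_mul_of_pos_left (Real.exp_lt_exp.mpr ?_) (hβ ▸ hβ0)
    rw [show x + 2 = 1 + (x + 1) by ring, Real.exp_add 1]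
    nlinarith [Real.exp_one_gt_d9, Real.exp_pos (x + 1)]
  · exact Real.exp_le_exp.mpr (neg_le_neg (Real.exp_le_exp.mpr (by linarith)))

/-- parameter-transfer lemma along a backward orbit. -/
theorem stmt_19 (x : ℝ) (hx : 10 < x)
    (lam1 lam2 : ℂ) (h1 : lam1 ≠ 0) (h2 : lam2 ≠ 0)
    (β : ℝ) (hβ : β = ‖Complex.log (lam1 / lam2)‖)
    (hβ0 : 0 < β) (hβx : β < Real.exp (-5 * Real.exp (x + 1)))
    (g1 g2 : ℂ → ℂ)
    (hg1 : ∀ w, g1 w = lam1 * Complex.exp w)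
    (hg2 : ∀ w, g2 w = lam2 * Complex.exp w)
    (n : ℕ) (hn1 : 1 ≤ n) (hn : (n : ℝ) ≤ Real.exp (3 * x))
    (zs : ℕ → ℂ) (hzs : ∀ j : ℕ, j < n → g1 (zs (j + 1)) = zs j)
    (hder : ∀ j k : ℕ, j + k ≤ n →
      Real.exp (-Real.exp (x + 1)) < ‖Df g1 j (g1^[k] (zs n))‖) :
    ∃ y : ℂ, g2^[n] y = g1^[n] (zs n) ∧
      (∀ j : ℕ, j ≤ n →
        ‖g2^[j] y - g1^[j] (zs n)‖ < β * Real.exp (Real.exp (x + 2))) ∧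
      ‖Complex.log (Df g2 n y / Df g1 n (zs n))‖ <
        Real.exp (-Real.exp x) :=
  stmt_19_general x hx lam1 lam2 h1 h2 β hβ hβ0 hβx g1 g2 hg1 hg2 n hn zs hder
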